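/- In ℍ¹, at every point with x² + y² ≠ 0: Δ_{ℍ¹}θ = 0, Δ_{ℍ¹}ρ = 3(x²+y²)/ρ³, and Δ_{ℍ¹}φ = 4cos(φ)/ρ², where ρ = ((x²+y²)²+t²)^{1/4}, φ = arccos(t/ρ²), θ = arctan(y/x). -/

import Mathlib

/-- The first Heisenberg group `ℍ¹` as `ℝ³`. -/
abbrev H1 := ℝ × ℝ × ℝ

/-- The vector field `X = ∂_x + 2y ∂_t`. -/
noncomputable def Xd (u : H1 → ℝ) (p : H1) : ℝ := fderiv ℝ u p (1, 0, 2 * p.2.1)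

/-- The vector field `Y = ∂_y − 2x ∂_t`. -/
noncomputable def Yd (u : H1 → ℝ) (p : H1) : ℝ := fderiv ℝ u p (0, 1, -(2 * p.1))

/-- Horizontal gradient `∇_{ℍ¹} u = (Xu, Yu)`. -/
noncomputable def gradH (u : H1 → ℝ) (p : H1) : ℝ × ℝ := (Xd u p, Yd u p)

/-- Kohn Laplacian `Δ_{ℍ¹} = X² + Y²`. -/
noncomputable def lapH (u : H1 → ℝ) (p : H1) : ℝ := Xd (Xd u) p + Yd (Yd u) p

/-- Koranyi gauge `ρ`. -/
noncomputable def rhoH (p : H1) : ℝ := ((p.1^2 + p.2.1^2)^2 + p.2.2^2) ^ ((1:ℝ)/4)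

/-- Angular coordinate `θ = arctan (y/x)`. -/
noncomputable def thetaH (p : H1) : ℝ := Real.arctan (p.2.1 / p.1)

/-- Angular coordinate `φ = arccos (t/ρ²)`. -/
noncomputable def phiH (p : H1) : ℝ := Real.arccos (p.2.2 / (rhoH p)^2)

/-!
Near a point with `x² + y² ≠ 0`, each of `θ, ρ, φ` has a horizontal gradient of the form
`f • V`: with `|z|² = x² + y²` and `(A, B) = ∇_{ℍ¹} ρ⁴ / 4 = (x|z|² + yt, y|z|² − xt)`,
`∇θ = |z|⁻² (−y, x)`, `∇ρ = (ρ / ρ⁴) (A, B)` and `∇φ = ρ⁻⁴ (−2B, 2A)`.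
Then `Δ u = f (X V₁ + Y V₂) + ⟨∇f, V⟩`, and everything follows from
`XA = YB = 3|z|²`, `YA = −XB = t` and `A² + B² = |z|² ρ⁴`. For `θ` and `φ` the term `⟨∇f, V⟩`
vanishes since `∇f` is parallel to `(x, y)`, resp. `(A, B)`, which is orthogonal to `V`.
-/

open Real Filter Topology

section DirDeriv

variable {E : Type*} [NormedAddCommGroup E] [NormedSpace ℝ E] {u v : E → ℝ} {a b : ℝ} {p w : E}

/-- Unlike `HasLineDerivAt`, this asks for Fréchet differentiability, so that `a` is the value
of `fderiv ℝ u p w`. -/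
def HasDirDerivAt (u : E → ℝ) (a : ℝ) (p w : E) : Prop :=
  ∃ L : E →L[ℝ] ℝ, HasFDerivAt u L p ∧ L w = a

lemma HasFDerivAt.hasDirDerivAt {L : E →L[ℝ] ℝ} (h : HasFDerivAt u L p) (w : E) :
    HasDirDerivAt u (L w) p w :=
  ⟨L, h, rfl⟩

lemma ContinuousLinearMap.hasDirDerivAt (L : E →L[ℝ] ℝ) : HasDirDerivAt L (L w) p w :=
  L.hasFDerivAt.hasDirDerivAt w

lemma hasDirDerivAt_const (c : ℝ) : HasDirDerivAt (fun _ : E => c) 0 p w :=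
  (hasFDerivAt_const c p).hasDirDerivAt w

namespace HasDirDerivAt

lemma fderiv_apply (h : HasDirDerivAt u a p w) : fderiv ℝ u p w = a := by
  obtain ⟨L, hL, rfl⟩ := h
  rw [hL.fderiv]

lemma congr_deriv (h : HasDirDerivAt u a p w) (hab : a = b) : HasDirDerivAt u b p w :=
  hab ▸ h

lemma add (hu : HasDirDerivAt u a p w) (hv : HasDirDerivAt v b p w) :
    HasDirDerivAt (fun q => u q + v q) (a + b) p w := by
  obtain ⟨L, hL, rfl⟩ := hu
  obtain ⟨M, hM, rfl⟩ := hv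
  exact (hL.add hM).hasDirDerivAt w

lemma mul (hu : HasDirDerivAt u a p w) (hv : HasDirDerivAt v b p w) :
    HasDirDerivAt (fun q => u q * v q) (a * v p + u p * b) p w := by
  obtain ⟨L, hL, rfl⟩ := hu
  obtain ⟨M, hM, rfl⟩ := hv
  exact ((hL.mul hM).hasDirDerivAt w).congr_deriv
    (by simp only [add_apply, smul_apply, smul_eq_mul]; ring)

end HasDirDerivAt

lemma HasDerivAt.comp_hasDirDerivAt {g : ℝ → ℝ} {g' : ℝ} (hg : HasDerivAt g g' (u p))
    (hu : HasDirDerivAt u a p w) : HasDirDerivAt (fun q => g (u q)) (g' * a) p w := by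
  obtain ⟨L, hL, rfl⟩ := hu
  exact ((hg.comp_hasFDerivAt p hL).hasDirDerivAt w).congr_deriv
    (by simp only [smul_apply, smul_eq_mul])

namespace HasDirDerivAt

lemma neg (hu : HasDirDerivAt u a p w) : HasDirDerivAt (fun q => -u q) (-a) p w :=
  ((hasDerivAt_neg (u p)).comp_hasDirDerivAt hu).congr_deriv (by ring)

lemma const_mul (c : ℝ) (hu : HasDirDerivAt u a p w) :
    HasDirDerivAt (fun q => c * u q) (c * a) p w :=
  ((hasDirDerivAt_const c).mul hu).congr_deriv (by ring)

lemma sub (hu : HasDirDerivAt u a p w) (hv : HasDirDerivAt v b p w) :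
    HasDirDerivAt (fun q => u q - v q) (a - b) p w :=
  (hu.add hv.neg).congr_deriv (by ring)

lemma pow (hu : HasDirDerivAt u a p w) (n : ℕ) :
    HasDirDerivAt (fun q => u q ^ n) (n * u p ^ (n - 1) * a) p w :=
  (hasDerivAt_pow n (u p)).comp_hasDirDerivAt hu

lemma inv (hu : HasDirDerivAt u a p w) (hp : u p ≠ 0) :
    HasDirDerivAt (fun q => (u q)⁻¹) (-a / u p ^ 2) p w :=
  ((hasDerivAt_inv hp).comp_hasDirDerivAt hu).congr_deriv (by ring)

lemma div (hu : HasDirDerivAt u a p w) (hv : HasDirDerivAt v b p w) (hp : v p ≠ 0) :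
    HasDirDerivAt (fun q => u q / v q) ((a * v p - u p * b) / v p ^ 2) p w :=
  (hu.mul (hv.inv hp)).congr_deriv (by field_simp; ring)

end HasDirDerivAt

end DirDeriv

def Xv (q : H1) : H1 := (1, 0, 2 * q.2.1)

def Yv (q : H1) : H1 := (0, 1, -(2 * q.1))

lemma gradH_eq {u : H1 → ℝ} {a b : ℝ} {q : H1} (hX : HasDirDerivAt u a q (Xv q))
    (hY : HasDirDerivAt u b q (Yv q)) :
    gradH u q = (a, b) :=
  Prod.ext hX.fderiv_apply hY.fderiv_apply

lemma lapH_eq_of_gradH_eq_smul {u f a b : H1 → ℝ} {p : H1} {fX fY aX bY : ℝ}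
    (hu : ∀ᶠ q in 𝓝 p, gradH u q = f q • (a q, b q))
    (hfX : HasDirDerivAt f fX p (Xv p)) (hfY : HasDirDerivAt f fY p (Yv p))
    (ha : HasDirDerivAt a aX p (Xv p)) (hb : HasDirDerivAt b bY p (Yv p)) :
    lapH u p = f p * (aX + bY) + (fX * a p + fY * b p) := by
  have hX : Xd u =ᶠ[𝓝 p] fun q => f q * a q := hu.mono fun q hq => congrArg Prod.fst hq
  have hY : Yd u =ᶠ[𝓝 p] fun q => f q * b q := hu.mono fun q hq => congrArg Prod.snd hq
  have hXX : Xd (Xd u) p = fX * a p + f p * aX := by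
    show fderiv ℝ (Xd u) p (Xv p) = _
    rw [hX.fderiv_eq]
    exact (hfX.mul ha).fderiv_apply
  have hYY : Yd (Yd u) p = fY * b p + f p * bY := by
    show fderiv ℝ (Yd u) p (Yv p) = _
    rw [hY.fderiv_eq]
    exact (hfY.mul hb).fderiv_apply
  rw [lapH, hXX, hYY]
  ring

def zsq (q : H1) : ℝ := q.1 ^ 2 + q.2.1 ^ 2

def rho4 (q : H1) : ℝ := zsq q ^ 2 + q.2.2 ^ 2

/-- `(gA, gB) = ∇_{ℍ¹} ρ⁴ / 4` -/
def gA (q : H1) : ℝ := q.1 * zsq q + q.2.1 * q.2.2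

def gB (q : H1) : ℝ := q.2.1 * zsq q - q.1 * q.2.2

section Coordinates

variable {q w : H1}

lemma hasDirDerivAt_x : HasDirDerivAt (fun q : H1 => q.1) w.1 q w :=
  hasFDerivAt_fst.hasDirDerivAt w

lemma hasDirDerivAt_y : HasDirDerivAt (fun q : H1 => q.2.1) w.2.1 q w :=
  ((ContinuousLinearMap.fst ℝ ℝ ℝ).comp (ContinuousLinearMap.snd ℝ ℝ (ℝ × ℝ))).hasDirDerivAt

lemma hasDirDerivAt_t : HasDirDerivAt (fun q : H1 => q.2.2) w.2.2 q w :=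
  ((ContinuousLinearMap.snd ℝ ℝ ℝ).comp (ContinuousLinearMap.snd ℝ ℝ (ℝ × ℝ))).hasDirDerivAt

lemma hasDirDerivAt_zsq : HasDirDerivAt zsq (2 * (q.1 * w.1 + q.2.1 * w.2.1)) q w :=
  ((hasDirDerivAt_x.pow 2).add (hasDirDerivAt_y.pow 2)).congr_deriv (by ring)

lemma hasDirDerivAt_rho4 :
    HasDirDerivAt rho4 (4 * zsq q * (q.1 * w.1 + q.2.1 * w.2.1) + 2 * q.2.2 * w.2.2) q w :=
  ((hasDirDerivAt_zsq.pow 2).add (hasDirDerivAt_t.pow 2)).congr_deriv (by ring)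

lemma hasDirDerivAt_rho4_Xv : HasDirDerivAt rho4 (4 * gA q) q (Xv q) :=
  hasDirDerivAt_rho4.congr_deriv (by simp only [Xv, gA]; ring)

lemma hasDirDerivAt_rho4_Yv : HasDirDerivAt rho4 (4 * gB q) q (Yv q) :=
  hasDirDerivAt_rho4.congr_deriv (by simp only [Yv, gB]; ring)

lemma hasDirDerivAt_gA :
    HasDirDerivAt gA (w.1 * zsq q + q.1 * (2 * (q.1 * w.1 + q.2.1 * w.2.1))
      + (w.2.1 * q.2.2 + q.2.1 * w.2.2)) q w :=
  (hasDirDerivAt_x.mul hasDirDerivAt_zsq).add (hasDirDerivAt_y.mul hasDirDerivAt_t)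

lemma hasDirDerivAt_gB :
    HasDirDerivAt gB (w.2.1 * zsq q + q.2.1 * (2 * (q.1 * w.1 + q.2.1 * w.2.1))
      - (w.1 * q.2.2 + q.1 * w.2.2)) q w :=
  (hasDirDerivAt_y.mul hasDirDerivAt_zsq).sub (hasDirDerivAt_x.mul hasDirDerivAt_t)

lemma hasDirDerivAt_gA_Xv : HasDirDerivAt gA (3 * zsq q) q (Xv q) :=
  hasDirDerivAt_gA.congr_deriv (by simp only [Xv, zsq]; ring)

lemma hasDirDerivAt_gA_Yv : HasDirDerivAt gA q.2.2 q (Yv q) :=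
  hasDirDerivAt_gA.congr_deriv (by simp only [Yv, zsq]; ring)

lemma hasDirDerivAt_gB_Xv : HasDirDerivAt gB (-q.2.2) q (Xv q) :=
  hasDirDerivAt_gB.congr_deriv (by simp only [Xv, zsq]; ring)

lemma hasDirDerivAt_gB_Yv : HasDirDerivAt gB (3 * zsq q) q (Yv q) :=
  hasDirDerivAt_gB.congr_deriv (by simp only [Yv, zsq]; ring)

lemma gA_sq_add_gB_sq (q : H1) : gA q ^ 2 + gB q ^ 2 = zsq q * rho4 q := by
  simp only [gA, gB, rho4, zsq]; ring

end Coordinates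

section Gauge

variable {p q w : H1} {n r : ℝ}

lemma eventually_zsq_ne_zero (hp : zsq p ≠ 0) : ∀ᶠ q in 𝓝 p, zsq q ≠ 0 := by
  have : Continuous zsq := by unfold zsq; fun_prop
  exact this.continuousAt.eventually_ne hp

lemma rho4_pos (hq : zsq q ≠ 0) : 0 < rho4 q := by
  unfold rho4
  positivity

lemma rhoH_eq_rpow (q : H1) : rhoH q = rho4 q ^ ((1 : ℝ) / 4) := rfl

lemma rhoH_pos (hq : zsq q ≠ 0) : 0 < rhoH q :=
  rpow_pos_of_pos (rho4_pos hq) _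

lemma rhoH_pow_four (q : H1) : rhoH q ^ 4 = rho4 q := by
  have hN : 0 ≤ rho4 q := by unfold rho4; positivity
  rw [rhoH_eq_rpow, ← rpow_natCast, ← rpow_mul hN]
  norm_num

lemma sqrt_one_sub_sq_t_div_rhoH_sq (hq : zsq q ≠ 0) :
    √(1 - (q.2.2 / rhoH q ^ 2) ^ 2) = zsq q / rhoH q ^ 2 := by
  have hρ := rhoH_pos hq
  have h4 := rhoH_pow_four q
  rw [show 1 - (q.2.2 / rhoH q ^ 2) ^ 2 = (zsq q / rhoH q ^ 2) ^ 2 by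
    field_simp
    unfold rho4 at h4
    linear_combination h4]
  exact sqrt_sq (by unfold zsq; positivity)

lemma abs_t_div_rhoH_sq_lt_one (hq : zsq q ≠ 0) : |q.2.2 / rhoH q ^ 2| < 1 := by
  have hρ := rhoH_pos hq
  have h4 := rhoH_pow_four q
  have hs : 0 < zsq q ^ 2 := by positivity
  rw [← sq_lt_one_iff_abs_lt_one, div_pow, div_lt_one (by positivity)]
  unfold rho4 at h4
  nlinarith

lemma hasDirDerivAt_rhoH (hq : zsq q ≠ 0) (hN : HasDirDerivAt rho4 n q w) :
    HasDirDerivAt rhoH (rhoH q / rho4 q * n / 4) q w :=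
  ((hasDerivAt_rpow_const (Or.inl (rho4_pos hq).ne')).comp_hasDirDerivAt hN).congr_deriv
    (by rw [rpow_sub_one (rho4_pos hq).ne', ← rhoH_eq_rpow]; ring)

lemma gradH_rhoH (hq : zsq q ≠ 0) : gradH rhoH q = (rhoH q / rho4 q) • (gA q, gB q) := by
  rw [Prod.smul_mk, smul_eq_mul, smul_eq_mul]
  exact gradH_eq ((hasDirDerivAt_rhoH hq hasDirDerivAt_rho4_Xv).congr_deriv (by ring))
    ((hasDirDerivAt_rhoH hq hasDirDerivAt_rho4_Yv).congr_deriv (by ring))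

lemma hasDirDerivAt_phiH (hq : zsq q ≠ 0) (hρ : HasDirDerivAt rhoH r q w) :
    HasDirDerivAt phiH (-(w.2.2 * rhoH q - 2 * q.2.2 * r) / (rhoH q * zsq q)) q w := by
  have hρ0 := (rhoH_pos hq).ne'
  have hc := hasDirDerivAt_t.div (hρ.pow 2) (pow_ne_zero 2 hρ0)
  obtain ⟨h₁, h₂⟩ := abs_lt.mp (abs_t_div_rhoH_sq_lt_one hq)
  refine ((hasDerivAt_arccos h₁.ne' h₂.ne).comp_hasDirDerivAt
    (u := fun q : H1 => q.2.2 / rhoH q ^ 2) hc).congr_deriv ?_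
  rw [sqrt_one_sub_sq_t_div_rhoH_sq hq]
  field_simp
  ring

lemma gradH_phiH (hq : zsq q ≠ 0) :
    gradH phiH q = (rho4 q)⁻¹ • (-(2 * gB q), 2 * gA q) := by
  have hρ0 := (rhoH_pos hq).ne'
  have hN0 := (rho4_pos hq).ne'
  rw [Prod.smul_mk, smul_eq_mul, smul_eq_mul]
  refine gradH_eq
    ((hasDirDerivAt_phiH hq (hasDirDerivAt_rhoH hq hasDirDerivAt_rho4_Xv)).congr_deriv ?_)
    ((hasDirDerivAt_phiH hq (hasDirDerivAt_rhoH hq hasDirDerivAt_rho4_Yv)).congr_deriv ?_)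
  · field_simp
    simp only [Xv, gA, gB, rho4]
    ring
  · field_simp
    simp only [Yv, gA, gB, rho4]
    ring

lemma hasDirDerivAt_thetaH (hx : q.1 ≠ 0) :
    HasDirDerivAt thetaH ((q.1 * w.2.1 - q.2.1 * w.1) / zsq q) q w := by
  have hs : zsq q ≠ 0 := by unfold zsq; positivity
  refine ((hasDerivAt_arctan _).comp_hasDirDerivAt
    (hasDirDerivAt_y.div hasDirDerivAt_x hx)).congr_deriv ?_
  unfold zsq at hs ⊢
  field_simp

lemma gradH_thetaH (hx : q.1 ≠ 0) : gradH thetaH q = (zsq q)⁻¹ • (-q.2.1, q.1) := by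
  rw [Prod.smul_mk, smul_eq_mul, smul_eq_mul]
  exact gradH_eq ((hasDirDerivAt_thetaH hx).congr_deriv (by simp only [Xv]; ring))
    ((hasDirDerivAt_thetaH hx).congr_deriv (by simp only [Yv]; ring))

end Gauge

section Laplacian

variable {p : H1}

lemma lapH_thetaH (hx : p.1 ≠ 0) : lapH thetaH p = 0 := by
  have hs : zsq p ≠ 0 := by unfold zsq; positivity
  have hgrad : ∀ᶠ q in 𝓝 p, gradH thetaH q = (zsq q)⁻¹ • (-q.2.1, q.1) :=
    (continuousAt_fst.eventually_ne hx).mono fun q hq => gradH_thetaH hq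
  rw [lapH_eq_of_gradH_eq_smul hgrad (hasDirDerivAt_zsq.inv hs) (hasDirDerivAt_zsq.inv hs)
    hasDirDerivAt_y.neg hasDirDerivAt_x]
  simp only [Xv, Yv]
  ring

lemma lapH_rhoH (hp : zsq p ≠ 0) : lapH rhoH p = 3 * zsq p / rhoH p ^ 3 := by
  have hN0 := (rho4_pos hp).ne'
  have hρ0 := (rhoH_pos hp).ne'
  have hgrad := (eventually_zsq_ne_zero hp).mono fun q hq => gradH_rhoH hq
  rw [lapH_eq_of_gradH_eq_smul hgrad
    ((hasDirDerivAt_rhoH hp hasDirDerivAt_rho4_Xv).div hasDirDerivAt_rho4_Xv hN0)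
    ((hasDirDerivAt_rhoH hp hasDirDerivAt_rho4_Yv).div hasDirDerivAt_rho4_Yv hN0)
    hasDirDerivAt_gA_Xv hasDirDerivAt_gB_Yv]
  have hAB := gA_sq_add_gB_sq p
  rw [← rhoH_pow_four p] at hAB ⊢
  field_simp
  linear_combination -3 * hAB

lemma lapH_phiH (hp : zsq p ≠ 0) : lapH phiH p = 4 * cos (phiH p) / rhoH p ^ 2 := by
  have hN0 := (rho4_pos hp).ne'
  have hρ0 := (rhoH_pos hp).ne'
  have hgrad := (eventually_zsq_ne_zero hp).mono fun q hq => gradH_phiH hq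
  rw [lapH_eq_of_gradH_eq_smul hgrad (hasDirDerivAt_rho4_Xv.inv hN0)
    (hasDirDerivAt_rho4_Yv.inv hN0) (hasDirDerivAt_gB_Xv.const_mul 2).neg
    (hasDirDerivAt_gA_Yv.const_mul 2)]
  obtain ⟨h₁, h₂⟩ := abs_lt.mp (abs_t_div_rhoH_sq_lt_one hp)
  rw [phiH, cos_arccos h₁.le h₂.le, ← rhoH_pow_four p]
  field_simp
  ring

end Laplacian

theorem polar_sublaplacians (p : H1) (hxy : p.1^2 + p.2.1^2 ≠ 0) :
    (p.1 ≠ 0 → lapH thetaH p = 0) ∧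
    lapH rhoH p = 3 * (p.1^2 + p.2.1^2) / (rhoH p)^3 ∧
    lapH phiH p = 4 * Real.cos (phiH p) / (rhoH p)^2 :=
  ⟨lapH_thetaH, lapH_rhoH hxy, lapH_phiH hxy⟩
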